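/- If a and b are positive dyadic rationals in canonical form with a^L < b < a (as rationals), then l(a^L) < l(b), where l denotes left-length. -/

import Mathlib

universe u

namespace SetTheory

/-- Pre-game, as in the former `Mathlib.SetTheory.Game.PGame` (removed from Mathlib). -/
inductive PGame : Type (u + 1)
  | mk : ∀ α β : Type u, (α → PGame) → (β → PGame) → PGame

namespace PGame

def LeftMoves : PGame → Type u
  | mk l _ _ _ => l

def RightMoves : PGame → Type u
  | mk _ r _ _ => r

def moveLeft : ∀ g : PGame, LeftMoves g → PGame
  | mk _l _ L _ => L

def moveRight : ∀ g : PGame, RightMoves g → PGame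
  | mk _ _r _ R => R

inductive IsOption : PGame → PGame → Prop
  | moveLeft {x : PGame} (i : x.LeftMoves) : IsOption (x.moveLeft i) x
  | moveRight {x : PGame} (i : x.RightMoves) : IsOption (x.moveRight i) x

instance : Zero PGame :=
  ⟨⟨PEmpty, PEmpty, PEmpty.elim, PEmpty.elim⟩⟩

def neg : PGame → PGame
  | ⟨l, r, L, R⟩ => ⟨r, l, fun i => neg (R i), fun i => neg (L i)⟩

instance : Neg PGame :=
  ⟨neg⟩

noncomputable instance : Add PGame.{u} :=
  ⟨fun x y => by
    induction x generalizing y with | mk xl xr _ _ IHxl IHxr => _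
    induction y with | mk yl yr yL yR IHyl IHyr => _
    have y := mk yl yr yL yR
    refine ⟨xl ⊕ yl, xr ⊕ yr, Sum.rec ?_ ?_, Sum.rec ?_ ?_⟩
    · exact fun i => IHxl i y
    · exact IHyl
    · exact fun i => IHxr i y
    · exact IHyr⟩

end PGame

end SetTheory

open SetTheory

namespace Misere

/-- `F` is a follower of `G`: reachable from `G` by a (possibly empty) sequence of moves. -/
def Follower (F G : PGame) : Prop := Relation.ReflTransGen PGame.IsOption F G

def IsLeftEnd (G : PGame) : Prop := IsEmpty G.LeftMoves
def IsRightEnd (G : PGame) : Prop := IsEmpty G.RightMoves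

/-- A dead left end: every follower (including itself) is a left end. -/
def DeadLeftEnd (G : PGame) : Prop := ∀ F, Follower F G → IsLeftEnd F
def DeadRightEnd (G : PGame) : Prop := ∀ F, Follower F G → IsRightEnd F
def DeadEnd (G : PGame) : Prop := DeadLeftEnd G ∨ DeadRightEnd G

/-- A game is dead-ending if every end follower is a dead end. -/
def DeadEnding (G : PGame) : Prop :=
  ∀ F, Follower F G → (IsLeftEnd F → DeadLeftEnd F) ∧ (IsRightEnd F → DeadRightEnd F)

/-- The universe of dead-ending games. -/
def E : Set PGame := {G | DeadEnding G}

/-- `(misereWins G).1` : Left, moving first, wins `G` under misère play;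
    `(misereWins G).2` : Right, moving first, wins `G` under misère play. -/
def misereWins : PGame → Prop × Prop
  | PGame.mk l r L R =>
      (IsEmpty l ∨ ∃ i, ¬ (misereWins (L i)).2,
       IsEmpty r ∨ ∃ j, ¬ (misereWins (R j)).1)

def LeftWinsGF (G : PGame) : Prop := (misereWins G).1
def RightWinsGF (G : PGame) : Prop := (misereWins G).2

inductive MOutcome : Type
  | L | N | P | R
deriving DecidableEq

/-- Partial order on misère outcomes: `R` minimal, `L` maximal, `N` and `P` incomparable. -/
def MOutcome.le : MOutcome → MOutcome → Prop
  | .R, _ => True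
  | _, .L => True
  | a, b => a = b

instance : LE MOutcome := ⟨MOutcome.le⟩

/-- The misère outcome of a game. -/
noncomputable def outcome (G : PGame) : MOutcome := by
  classical
  exact if LeftWinsGF G then (if RightWinsGF G then .N else .L)
        else (if RightWinsGF G then .R else .P)

/-- `G ≡ H (mod U)`. -/
def equivMod (U : Set PGame) (G H : PGame) : Prop :=
  ∀ X ∈ U, outcome (G + X) = outcome (H + X)

/-- `G ≧ H (mod U)`. -/
def geMod (U : Set PGame) (G H : PGame) : Prop :=
  ∀ X ∈ U, outcome (H + X) ≤ outcome (G + X)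

/-- `LeftChain G n`: there is a sequence of `n` consecutive Left moves from `G`
ending at the zero position. -/
inductive LeftChain : PGame → ℕ → Prop
  | zero (G : PGame) : IsLeftEnd G → IsRightEnd G → LeftChain G 0
  | succ (G : PGame) (i : G.LeftMoves) (n : ℕ) :
      LeftChain (G.moveLeft i) n → LeftChain G (n + 1)

inductive RightChain : PGame → ℕ → Prop
  | zero (G : PGame) : IsLeftEnd G → IsRightEnd G → RightChain G 0
  | succ (G : PGame) (j : G.RightMoves) (n : ℕ) :
      RightChain (G.moveRight j) n → RightChain G (n + 1)

/-- Left-length: minimum number of consecutive Left moves needed to reach zero. -/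
noncomputable def leftLength (G : PGame) : ℕ := sInf {n | LeftChain G n}

/-- Right-length: minimum number of consecutive Right moves needed to reach zero. -/
noncomputable def rightLength (G : PGame) : ℕ := sInf {n | RightChain G n}

/-- Normal-play canonical form of a nonnegative integer. -/
def natGame : ℕ → PGame
  | 0 => 0
  | n + 1 => PGame.mk PUnit PEmpty (fun _ => natGame n) PEmpty.elim

/-- Normal-play canonical form of an integer (negatives are conjugates). -/
def intGame (n : ℤ) : PGame :=
  if 0 ≤ n then natGame n.toNat else -natGame (-n).toNat

/-- Normal-play canonical form of the dyadic rational `m / 2 ^ j`. -/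
def dyadicGame : ℤ → ℕ → PGame
  | m, 0 => intGame m
  | m, j + 1 =>
      if m % 2 = 0 then dyadicGame (m / 2) j
      else PGame.mk PUnit PUnit (fun _ => dyadicGame ((m - 1) / 2) j)
            (fun _ => dyadicGame ((m + 1) / 2) j)

/-- The closure of dead ends: finite disjunctive sums of dead ends. -/
def DeadEndClosure : Set PGame :=
  {G | ∃ l : List PGame, (∀ x ∈ l, DeadEnd x) ∧ G = l.sum}

end Misere

/-! The Left option of a canonical dyadic removes its last binary digit `1` after the point
(of an integer, it subtracts one), so the left-length of `m / 2 ^ j` is its integer part plus the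
number of digits `1` after the binary point. Writing `a^L = c / 2 ^ j`, we have
`a = (c + 1) / 2 ^ j`, so a `b` strictly between them has the binary expansion of `a^L` up to
position `j` followed by at least one further digit `1`; hence `l(b) > l(a^L)`. -/

namespace Misere

/-- The left-length of `dyadicGame m j` when `0 ≤ m`: the integer part of `m / 2 ^ j` plus the
number of digits `1` after its binary point. -/
def dyadicLeftLength : ℤ → ℕ → ℕ
  | m, 0 => m.toNat
  | m, j + 1 =>
    if m % 2 = 0 then dyadicLeftLength (m / 2) j else dyadicLeftLength ((m - 1) / 2) j + 1

lemma dyadicLeftLength_two_mul_add (x b : ℤ) (hb₀ : 0 ≤ b) (hb₂ : b < 2) (j : ℕ) :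
    dyadicLeftLength (2 * x + b) (j + 1) = dyadicLeftLength x j + b.toNat := by
  obtain rfl | rfl : b = 0 ∨ b = 1 := by omega
  · simp [dyadicLeftLength]
  · rw [dyadicLeftLength, if_neg (by omega), show (2 * x + 1 - 1) / 2 = x by omega]
    rfl

lemma dyadicLeftLength_mul_pow_add (q : ℤ) (j : ℕ) :
    ∀ (k : ℕ) (r : ℤ), 0 ≤ r → r < 2 ^ k →
      dyadicLeftLength (q * 2 ^ k + r) (j + k) = dyadicLeftLength q j + dyadicLeftLength r k
  | 0, r, hr, hrk => by
    obtain rfl : r = 0 := by omega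
    simp [dyadicLeftLength]
  | k + 1, r, hr, hrk => by
    obtain ⟨s, b, hb₀, hb₂, rfl⟩ : ∃ s b, 0 ≤ b ∧ b < 2 ∧ r = 2 * s + b :=
      ⟨r / 2, r % 2, by omega, by omega, by omega⟩
    rw [show q * 2 ^ (k + 1) + (2 * s + b) = 2 * (q * 2 ^ k + s) + b by ring, ← add_assoc,
      dyadicLeftLength_two_mul_add _ _ hb₀ hb₂, dyadicLeftLength_two_mul_add _ _ hb₀ hb₂,
      dyadicLeftLength_mul_pow_add q j k s (by omega) (by rw [pow_succ] at hrk; omega)]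
    ring

lemma dyadicLeftLength_pos : ∀ {r : ℤ} (k : ℕ), 0 < r → 0 < dyadicLeftLength r k
  | r, 0, hr => by simp [dyadicLeftLength]; omega
  | r, k + 1, hr => by
    rw [dyadicLeftLength]
    split_ifs with h
    · exact dyadicLeftLength_pos k (by omega)
    · omega

lemma dyadicLeftLength_lt_of_lt_of_lt {c m : ℤ} {j k : ℕ} (h1 : (c : ℚ) / 2 ^ j < m / 2 ^ k)
    (h2 : (m : ℚ) / 2 ^ k < (c + 1) / 2 ^ j) : dyadicLeftLength c j < dyadicLeftLength m k := by
  rw [div_lt_div_iff₀ (by positivity) (by positivity)] at h1 h2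
  have H1 : c * 2 ^ k < m * 2 ^ j := by exact_mod_cast h1
  have H2 : m * 2 ^ j < (c + 1) * 2 ^ k := by exact_mod_cast h2
  rcases le_total k j with hkj | hjk
  · obtain ⟨d, rfl⟩ := Nat.exists_eq_add_of_le hkj
    have hpos : (0 : ℤ) < 2 ^ k := by positivity
    rw [pow_add] at H1 H2
    have hlo : c < m * 2 ^ d := lt_of_mul_lt_mul_right (by linarith) hpos.le
    have hhi : m * 2 ^ d < c + 1 := lt_of_mul_lt_mul_right (by linarith) hpos.le
    omega
  · obtain ⟨d, rfl⟩ := Nat.exists_eq_add_of_le hjk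
    have hpos : (0 : ℤ) < 2 ^ j := by positivity
    rw [pow_add] at H1 H2
    have hlo : c * 2 ^ d < m := lt_of_mul_lt_mul_right (by linarith) hpos.le
    have hhi : m < (c + 1) * 2 ^ d := lt_of_mul_lt_mul_right (by linarith) hpos.le
    obtain ⟨r, rfl⟩ : ∃ r, m = c * 2 ^ d + r := ⟨m - c * 2 ^ d, by ring⟩
    rw [dyadicLeftLength_mul_pow_add _ _ _ _ (by omega) (by linarith)]
    have := dyadicLeftLength_pos d (show 0 < r by omega)
    omega

lemma leftLength_eq_of_forall_leftChain_iff {G : PGame} {k : ℕ}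
    (h : ∀ n, LeftChain G n ↔ n = k) : leftLength G = k := by
  simp [leftLength, h]

lemma leftChain_zero_iff (n : ℕ) : LeftChain 0 n ↔ n = 0 := by
  constructor
  · rintro (_ | ⟨_, i, _, _⟩)
    · rfl
    · exact PEmpty.elim i
  · rintro rfl
    exact .zero _ ⟨PEmpty.elim⟩ ⟨PEmpty.elim⟩

lemma leftChain_mk_punit_iff {β : Type u} {G : PGame.{u}} {R : β → PGame.{u}} {k : ℕ}
    (hG : ∀ n, LeftChain G n ↔ n = k) (n : ℕ) :
    LeftChain (PGame.mk PUnit β (fun _ => G) R) n ↔ n = k + 1 := by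
  constructor
  · rintro (⟨_, hL, _⟩ | ⟨_, _, n, h⟩)
    · exact (hL.false PUnit.unit).elim
    · rw [(hG n).mp h]
  · rintro rfl
    exact .succ (.mk _ _ _ _) PUnit.unit k ((hG k).mpr rfl)

lemma leftChain_natGame_iff (k n : ℕ) : LeftChain (natGame k) n ↔ n = k := by
  induction k generalizing n with
  | zero => exact leftChain_zero_iff n
  | succ k ih => exact leftChain_mk_punit_iff ih n

lemma leftChain_dyadicGame_iff {m : ℤ} (hm : 0 ≤ m) (j n : ℕ) :
    LeftChain (dyadicGame m j) n ↔ n = dyadicLeftLength m j := by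
  induction j generalizing m n with
  | zero =>
    simpa [dyadicGame, intGame, hm, dyadicLeftLength] using leftChain_natGame_iff m.toNat n
  | succ j ih =>
    rw [dyadicGame, dyadicLeftLength]
    split_ifs
    · exact ih (by omega) n
    · exact leftChain_mk_punit_iff (ih (by omega)) n

lemma leftLength_dyadicGame {m : ℤ} (hm : 0 ≤ m) (j : ℕ) :
    leftLength (dyadicGame m j) = dyadicLeftLength m j :=
  leftLength_eq_of_forall_leftChain_iff (leftChain_dyadicGame_iff hm j)

lemma dyadicGame_moveLeft {m : ℤ} {j : ℕ} (hm : 0 < m) (hr : Odd m ∨ j = 0)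
    (i : (dyadicGame m j).LeftMoves) : (dyadicGame m j).moveLeft i = dyadicGame (m - 1) j := by
  cases j with
  | zero =>
    revert i
    rw [show dyadicGame m 0 = natGame ((m - 1).toNat + 1) by
      simp only [dyadicGame, intGame, if_pos hm.le]; congr 1; omega]
    intro i
    show _ = intGame (m - 1)
    rw [intGame, if_pos (by omega)]
    rfl
  | succ j =>
    have hodd : m % 2 = 1 := Int.odd_iff.mp (hr.resolve_right j.succ_ne_zero)
    revert i
    rw [dyadicGame, if_neg (by omega)]
    intro i
    rw [dyadicGame, if_pos (by omega)]
    rfl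

end Misere

open Misere SetTheory PGame

theorem stmt16_general (ma mb : ℤ) (ja jb : ℕ) (hma : 0 < ma) (hmb : 0 < mb)
    (hra : Odd ma ∨ ja = 0)
    (h1 : ((ma : ℚ) - 1) / 2 ^ ja < (mb : ℚ) / 2 ^ jb)
    (h2 : (mb : ℚ) / 2 ^ jb < (ma : ℚ) / 2 ^ ja) :
    ∀ il : (dyadicGame ma ja).LeftMoves,
      leftLength ((dyadicGame ma ja).moveLeft il) < leftLength (dyadicGame mb jb) := by
  intro il
  rw [dyadicGame_moveLeft hma hra il, leftLength_dyadicGame (by omega),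
    leftLength_dyadicGame hmb.le]
  exact dyadicLeftLength_lt_of_lt_of_lt (by simpa using h1) (by simpa using h2)

/-- if a and b are positive canonical dyadics with a^L < b < a
(as rationals), then l(a^L) < l(b). -/
theorem stmt16 (ma mb : ℤ) (ja jb : ℕ) (hma : 0 < ma) (hmb : 0 < mb)
    (hra : Odd ma ∨ ja = 0) (hrb : Odd mb ∨ jb = 0)
    (h1 : ((ma : ℚ) - 1) / 2 ^ ja < (mb : ℚ) / 2 ^ jb)
    (h2 : (mb : ℚ) / 2 ^ jb < (ma : ℚ) / 2 ^ ja) :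
    ∀ il : (dyadicGame ma ja).LeftMoves,
      leftLength ((dyadicGame ma ja).moveLeft il) < leftLength (dyadicGame mb jb) :=
  stmt16_general ma mb ja jb hma hmb hra h1 h2
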